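/- Let k be a field of characteristic zero and (R,Δ) a commutative differential k-algebra with R a finitely generated (affine) k-algebra. If P is a Δ-primitive ideal of R, then P is Δ-rational: the Δ-center Z_Δ(Fract(R/P)) of the quotient field of R/P is algebraic over k. -/

import Mathlib

section Defs

variable {k R : Type*} [CommRing k] [CommRing R] [Algebra k R]

/-- An ideal stable under all derivations in `Δ`. -/
def IsDeltaIdeal (Δ : Set (Derivation k R R)) (I : Ideal R) : Prop :=
  ∀ δ ∈ Δ, ∀ x ∈ I, δ x ∈ I

/-- The `Δ`-core of an ideal `J`: the largest `Δ`-stable ideal contained in `J`. -/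
def deltaCore (Δ : Set (Derivation k R R)) (J : Ideal R) : Ideal R :=
  sSup {I : Ideal R | IsDeltaIdeal Δ I ∧ I ≤ J}

/-- A `Δ`-prime ideal: a proper `Δ`-ideal `Q` such that whenever a product of two
`Δ`-ideals lies in `Q`, one of them lies in `Q`. -/
def IsDeltaPrime (Δ : Set (Derivation k R R)) (Q : Ideal R) : Prop :=
  Q ≠ ⊤ ∧ IsDeltaIdeal Δ Q ∧
    ∀ I J : Ideal R, IsDeltaIdeal Δ I → IsDeltaIdeal Δ J → I * J ≤ Q → I ≤ Q ∨ J ≤ Q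

/-- A `Δ`-primitive ideal: the `Δ`-core of a maximal ideal. -/
def IsDeltaPrimitive (Δ : Set (Derivation k R R)) (P : Ideal R) : Prop :=
  ∃ M : Ideal R, M.IsMaximal ∧ deltaCore Δ M = P

end Defs

/-!
The derivations in `Δ` descend to `R ⧸ P` and extend to `K = Fract(R ⧸ P)`. In characteristic
zero the radical of a `Δ`-ideal is a `Δ`-ideal, and with this the `Δ`-core `P` of the maximal
ideal `M` is prime. For a constant `y ∈ K`, the ideal of denominators of `y` in `R` is a
`Δ`-ideal not contained in `P`, hence not contained in `M`: every constant is regular at `M`,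
and so is the inverse of every nonzero constant. Now let `x` be a constant. By the
Nullstellensatz `R ⧸ M` is finite over `k`, so the residue of `x` is a root of some `p ≠ 0`.
Then `p(x)` is a constant vanishing at `M`; being a unit at `M` if nonzero, it must be `0`.
-/

open Polynomial

section DeltaCore

variable {k R : Type*} [CommRing k] [CommRing R] [Algebra k R]
  {Δ : Set (Derivation k R R)} {I J : Ideal R}

lemma isDeltaIdeal_sSup {s : Set (Ideal R)} (hs : ∀ I ∈ s, IsDeltaIdeal Δ I) :
    IsDeltaIdeal Δ (sSup s) := by
  intro δ hδ x hx
  rw [sSup_eq_iSup'] at hx ⊢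
  refine Submodule.iSup_induction _ (motive := fun x => δ x ∈ _) hx
    (fun I x hx => Submodule.mem_iSup_of_mem I (hs I I.2 δ hδ x hx)) (by simp) fun x y hx hy => ?_
  simpa using add_mem hx hy

lemma deltaCore_le : deltaCore Δ J ≤ J := sSup_le fun _ hI => hI.2

lemma le_deltaCore (hI : IsDeltaIdeal Δ I) (hIJ : I ≤ J) : I ≤ deltaCore Δ J := le_sSup ⟨hI, hIJ⟩

lemma isDeltaIdeal_deltaCore : IsDeltaIdeal Δ (deltaCore Δ J) :=
  isDeltaIdeal_sSup fun _ hI => hI.1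

end DeltaCore

lemma Ideal.mem_of_natCast_mul_mem (k : Type*) {R : Type*} [Field k] [CharZero k] [CommRing R]
    [Algebra k R] {I : Ideal R} {n : ℕ} (hn : n ≠ 0) {y : R} (h : (n : R) * y ∈ I) : y ∈ I := by
  have hunit : IsUnit (n : R) := by
    simpa using (IsUnit.mk0 (n : k) (Nat.cast_ne_zero.mpr hn)).map (algebraMap k R)
  exact (Ideal.unit_mul_mem_iff_mem I hunit).1 h

lemma Derivation.mul_map_pow {k A : Type*} [CommRing k] [CommRing A] [Algebra k A]
    (D : Derivation k A A) (a : A) (n : ℕ) : a * D (a ^ n) = n * (a ^ n * D a) := by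
  cases n with
  | zero => simp
  | succ n => simp only [D.leibniz_pow, nsmul_eq_mul, smul_eq_mul, Nat.add_sub_cancel]; ring

section Radical

variable {k R : Type*} [Field k] [CharZero k] [CommRing R] [Algebra k R]
  {δ : Derivation k R R} {I : Ideal R}

lemma pow_mul_sq_mem_of_pow_succ_mul_mem (hI : ∀ x ∈ I, δ x ∈ I) {x : R} {m j : ℕ}
    (h : x ^ (m + 1) * δ x ^ (2 * j) ∈ I) : x ^ m * δ x ^ (2 * (j + 1)) ∈ I := by
  set y := δ x
  have key : ((m + 1 : ℕ) : R) * (x ^ m * y ^ (2 * (j + 1)))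
      = δ (x ^ (m + 1) * y ^ (2 * j)) * y - (2 * j : ℕ) * δ y * (x ^ (m + 1) * y ^ (2 * j)) := by
    have hy := δ.mul_map_pow y (2 * j)
    have hx : δ (x ^ (m + 1)) = ((m + 1 : ℕ) : R) * (x ^ m * y) := by
      simp only [δ.leibniz_pow, Nat.add_sub_cancel, smul_eq_mul, nsmul_eq_mul]; rfl
    rw [δ.leibniz, hx]
    simp only [smul_eq_mul]
    linear_combination -(x ^ (m + 1)) * hy
  refine Ideal.mem_of_natCast_mul_mem k (Nat.succ_ne_zero m) ?_
  rw [key]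
  exact sub_mem (I.mul_mem_right _ (hI _ h)) (I.mul_mem_left _ h)

lemma pow_mem_of_pow_mul_mem (hI : ∀ x ∈ I, δ x ∈ I) {x : R} (m : ℕ) :
    ∀ j, x ^ m * δ x ^ (2 * j) ∈ I → δ x ^ (2 * (j + m)) ∈ I := by
  induction m with
  | zero => simp
  | succ m ih =>
    intro j h
    simpa [add_assoc, add_comm 1 m] using ih (j + 1) (pow_mul_sq_mem_of_pow_succ_mul_mem hI h)

lemma IsDeltaIdeal.radical {Δ : Set (Derivation k R R)} (hI : IsDeltaIdeal Δ I) :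
    IsDeltaIdeal Δ I.radical := by
  rintro δ hδ x ⟨n, hn⟩
  exact ⟨2 * n, by simpa using pow_mem_of_pow_mul_mem (hI δ hδ) n 0 (by simpa using hn)⟩

end Radical

section Prime

variable {k R : Type*} [CommRing k] [CommRing R] [Algebra k R] {Δ : Set (Derivation k R R)}
  {P : Ideal R}

lemma IsDeltaIdeal.map_mul_mem_of_isRadical (hP : IsDeltaIdeal Δ P) (hrad : P.IsRadical)
    {δ : Derivation k R R} (hδ : δ ∈ Δ) {r s : R} (hrs : r * s ∈ P) : δ r * s ∈ P := by
  have hd : r * δ s + s * δ r ∈ P := by simpa using hP δ hδ _ hrs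
  refine hrad ⟨2, ?_⟩
  have e : (δ r * s) ^ 2 = δ r * s * (r * δ s + s * δ r) - r * s * (δ r * δ s) := by ring
  rw [e]
  exact sub_mem (P.mul_mem_left _ hd) (P.mul_mem_right _ hrs)

lemma IsDeltaIdeal.colon (hP : IsDeltaIdeal Δ P) (hrad : P.IsRadical) (S : Set R) :
    IsDeltaIdeal Δ (P.colon S) := by
  intro δ hδ r hr
  rw [Submodule.mem_colon] at hr ⊢
  exact fun s hs => hP.map_mul_mem_of_isRadical hrad hδ (hr s hs)

lemma deltaCore_isPrime {k : Type*} [Field k] [CharZero k] [Algebra k R]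
    {Δ : Set (Derivation k R R)} {M : Ideal R} (hM : M.IsPrime) : (deltaCore Δ M).IsPrime := by
  set P := deltaCore Δ M
  have hPΔ : IsDeltaIdeal Δ P := isDeltaIdeal_deltaCore
  have hrad : P.IsRadical := le_deltaCore hPΔ.radical <|
    (Ideal.radical_mono deltaCore_le).trans hM.radical.le
  refine ⟨fun h => hM.ne_top (top_le_iff.mp (h ▸ deltaCore_le)), fun {a b} hab => ?_⟩
  set T := P.colon {b}
  set U := P.colon (T : Set R)
  have haT : a ∈ T := Submodule.mem_colon_singleton.mpr hab
  have hbU : b ∈ U := Submodule.mem_colon.mpr fun t ht => by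
    simpa [mul_comm] using Submodule.mem_colon_singleton.mp ht
  have hTU : T * U ≤ M := Ideal.mul_le.mpr fun t ht u hu =>
    deltaCore_le (by simpa [mul_comm] using Submodule.mem_colon.mp hu t ht)
  rcases hM.mul_le.mp hTU with hT | hU
  · exact .inl (le_deltaCore (hPΔ.colon hrad _) hT haT)
  · exact .inr (le_deltaCore (hPΔ.colon hrad _) hU hbU)

end Prime

lemma Derivation.exists_map_algebraMap_eq_of_formallyEtale {k A T : Type*} [CommRing k] [CommRing A]
    [CommRing T] [Algebra k A] [Algebra k T] [Algebra A T] [IsScalarTower k A T]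
    [Algebra.FormallyEtale A T] (d : Derivation k A T) :
    ∃ D : Derivation k T T, ∀ a, D (algebraMap A T a) = d a := by
  let e := KaehlerDifferential.tensorKaehlerEquivOfFormallyEtale k A T
  let g : Ω[T⁄k] →ₗ[T] T := (d.liftKaehlerDifferential.liftBaseChange T) ∘ₗ e.symm.toLinearMap
  refine ⟨g.compDer (KaehlerDifferential.D k T), fun a => ?_⟩
  simp [g, e, KaehlerDifferential.tensorKaehlerEquivOfFormallyEtale_symm_D_algebraMap]

lemma exists_derivation_fractionRing_quotient {k R : Type*} [CommRing k] [CommRing R]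
    [Algebra k R] {P : Ideal R} {δ : Derivation k R R} (hP : ∀ x ∈ P, δ x ∈ P) :
    ∃ D : Derivation k (FractionRing (R ⧸ P)) (FractionRing (R ⧸ P)), ∀ r,
      D (algebraMap _ _ (Ideal.Quotient.mk P r)) = algebraMap _ _ (Ideal.Quotient.mk P (δ r)) := by
  have hδP : ∀ r, Ideal.Quotient.mkₐ k P r = 0 → Ideal.Quotient.mkₐ k P (δ r) = 0 := by
    simpa [Ideal.Quotient.eq_zero_iff_mem] using hP
  let d := Derivation.liftOfSurjective (Ideal.Quotient.mkₐ_surjective k P) hδP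
  have := Algebra.FormallyEtale.of_isLocalization (Rₘ := FractionRing (R ⧸ P))
    (nonZeroDivisors (R ⧸ P))
  obtain ⟨D, hD⟩ := Derivation.exists_map_algebraMap_eq_of_formallyEtale
    ((Algebra.linearMap (R ⧸ P) (FractionRing (R ⧸ P))).compDer d)
  refine ⟨D, fun r => ?_⟩
  rw [hD]
  exact congrArg (algebraMap _ _) (Derivation.liftOfSurjective_apply _ hδP r)

section Regular

variable {R K : Type*} [CommRing R] [CommRing K]

def IsRegularAt (f : R →+* K) (M : Ideal R) (y : K) : Prop :=
  ∃ a, ∃ b ∉ M, y * f b = f a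

def denominatorIdeal (f : R →+* K) (y : K) : Ideal R where
  carrier := {b | ∃ a, y * f b = f a}
  add_mem' := by
    rintro b c ⟨a, ha⟩ ⟨a', ha'⟩
    exact ⟨a + a', by rw [map_add, mul_add, ha, ha', map_add]⟩
  zero_mem' := ⟨0, by simp⟩
  smul_mem' := by
    rintro c b ⟨a, ha⟩
    exact ⟨c * a, by rw [smul_eq_mul, map_mul, map_mul, mul_left_comm, ha]⟩

variable {k : Type*} [CommRing k] [Algebra k R] [Algebra k K] {Δ : Set (Derivation k R R)}
  {f : R →+* K} {y : K}

lemma isDeltaIdeal_denominatorIdeal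
    (hD : ∀ δ ∈ Δ, ∃ D : Derivation k K K, (∀ r, D (f r) = f (δ r)) ∧ D y = 0) :
    IsDeltaIdeal Δ (denominatorIdeal f y) := by
  rintro δ hδ b ⟨a, ha⟩
  obtain ⟨D, hDf, hDy⟩ := hD δ hδ
  refine ⟨δ a, ?_⟩
  simpa [D.leibniz, hDf, hDy] using congrArg D ha

lemma isRegularAt_of_derivation_eq_zero {M : Ideal R} (hcore : deltaCore Δ M ≤ RingHom.ker f)
    {a s : R} (hs : f s ≠ 0) (hy : y * f s = f a)
    (hD : ∀ δ ∈ Δ, ∃ D : Derivation k K K, (∀ r, D (f r) = f (δ r)) ∧ D y = 0) :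
    IsRegularAt f M y := by
  by_contra hreg
  have hle : denominatorIdeal f y ≤ M := fun b ⟨a, hb⟩ => by
    by_contra hbM
    exact hreg ⟨a, b, hbM, hb⟩
  exact hs (hcore (le_deltaCore (isDeltaIdeal_denominatorIdeal hD) hle ⟨a, hy⟩))

end Regular

lemma AlgHom.map_eval_scaleRoots {k R S : Type*} [CommRing k] [CommRing R] [CommRing S]
    [Algebra k R] [Algebra k S] (g : R →ₐ[k] S) (p : k[X]) {a b : R} {z : S}
    (h : g b * z = g a) :
    g (((p.map (algebraMap k R)).scaleRoots b).eval a)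
      = g b ^ (p.map (algebraMap k R)).natDegree * aeval z p := by
  replace h : (g : R →+* S) b * z = (g : R →+* S) a := h
  rw [← RingHom.coe_coe g, ← eval₂_at_apply, ← h, scaleRoots_eval₂_mul, eval₂_map,
    AlgHom.comp_algebraMap, aeval_def]

lemma isAlgebraic_of_isRegularAt {k R K : Type*} [Field k] [CommRing R] [Algebra k R] [Field K]
    [Algebra k K] (f : R →ₐ[k] K) {M : Ideal R} [M.IsMaximal] [Algebra.IsAlgebraic k (R ⧸ M)]
    (hker : RingHom.ker f ≤ M) {x : K} (hx : IsRegularAt (f : R →+* K) M x)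
    (hinv : ∀ p : k[X], aeval x p ≠ 0 → IsRegularAt (f : R →+* K) M (aeval x p)⁻¹) :
    IsAlgebraic k x := by
  obtain ⟨a, b, hbM, hab⟩ := hx
  let := Ideal.Quotient.field M
  set π := Ideal.Quotient.mkₐ k M
  have hπ : ∀ r, π r = 0 ↔ r ∈ M := fun r => Ideal.Quotient.eq_zero_iff_mem
  have hπb : π b ≠ 0 := (hπ b).not.mpr hbM
  obtain ⟨p, hp0, hpz⟩ := Algebra.IsAlgebraic.isAlgebraic (R := k) (π a / π b)
  refine ⟨p, hp0, ?_⟩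
  by_contra hpx
  obtain ⟨t, s, hsM, hst⟩ := hinv p hpx
  replace hst : (aeval x p)⁻¹ * f s = f t := hst
  set N := (p.map (algebraMap k R)).natDegree
  -- `c = b ^ N * p (a / b)`: a numerator of `p(x)`, with denominator `b ^ N`
  set c := ((p.map (algebraMap k R)).scaleRoots b).eval a
  have hcM : c ∈ M := by
    rw [← hπ, π.map_eval_scaleRoots p (mul_div_cancel₀ _ hπb), hpz, mul_zero]
  have hfc : f c = f b ^ N * aeval x p := f.map_eval_scaleRoots p (by simpa [mul_comm] using hab)
  have hker' : t * c - s * b ^ N ∈ M := by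
    refine hker ?_
    rw [RingHom.mem_ker, map_sub, map_mul, map_mul, hfc, ← hst, map_pow]
    field_simp
    ring
  have hsb : s * b ^ N ∈ M := by simpa using sub_mem (M.mul_mem_left t hcM) hker'
  rcases Ideal.IsPrime.mem_or_mem inferInstance hsb with h | h
  · exact hsM h
  · exact hbM (Ideal.IsPrime.mem_of_pow_mem inferInstance _ h)

/-- If `R` is an affine (finitely generated) `k`-algebra and `P` is a
`Δ`-primitive ideal of `R`, then `P` is `Δ`-rational: every element of the `Δ`-center of
`Fract(R/P)` (i.e. every element killed by all the derivations of `Fract(R/P)` induced by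
the derivations in `Δ`) is algebraic over `k`. -/
theorem deltaPrimitive_isDeltaRational
    {k R : Type*} [Field k] [CharZero k] [CommRing R] [Algebra k R]
    [Algebra.FiniteType k R]
    (Δ : Set (Derivation k R R)) (P : Ideal R) (hP : IsDeltaPrimitive Δ P) :
    ∀ x : FractionRing (R ⧸ P),
      (∀ D : Derivation k (FractionRing (R ⧸ P)) (FractionRing (R ⧸ P)),
        (∃ δ ∈ Δ, ∀ r : R,
          D (algebraMap (R ⧸ P) (FractionRing (R ⧸ P)) (Ideal.Quotient.mk P r)) =
            algebraMap (R ⧸ P) (FractionRing (R ⧸ P)) (Ideal.Quotient.mk P (δ r))) →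
        D x = 0) →
      IsAlgebraic k x := by
  obtain ⟨M, hM, rfl⟩ := hP
  have := deltaCore_isPrime (Δ := Δ) hM.isPrime
  let f : R →ₐ[k] FractionRing (R ⧸ deltaCore Δ M) :=
    (IsScalarTower.toAlgHom k _ _).comp (Ideal.Quotient.mkₐ k (deltaCore Δ M))
  have hf : ∀ r, f r = 0 ↔ r ∈ deltaCore Δ M := fun r => by
    simp [f, Ideal.Quotient.eq_zero_iff_mem]
  have hconst : ∀ y, (∀ D : Derivation k _ _, (∃ δ ∈ Δ, ∀ r, D (f r) = f (δ r)) → D y = 0) →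
      IsRegularAt (f : R →+* _) M y := by
    intro y hy
    obtain ⟨⟨a', s', hs'⟩, hys⟩ := IsLocalization.surj (nonZeroDivisors (R ⧸ deltaCore Δ M)) y
    obtain ⟨a, rfl⟩ := Ideal.Quotient.mk_surjective a'
    obtain ⟨s, rfl⟩ := Ideal.Quotient.mk_surjective s'
    have hs : f s ≠ 0 :=
      IsFractionRing.to_map_ne_zero_of_mem_nonZeroDivisors (R := R ⧸ deltaCore Δ M) hs'
    refine isRegularAt_of_derivation_eq_zero (fun r hr => (hf r).mpr hr) hs hys fun δ hδ => ?_
    obtain ⟨D, hD⟩ := exists_derivation_fractionRing_quotient (isDeltaIdeal_deltaCore δ hδ)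
    exact ⟨D, hD, hy D ⟨δ, hδ, hD⟩⟩
  let := Ideal.Quotient.field M
  have : Module.Finite k (R ⧸ M) := finite_of_finite_type_of_isJacobsonRing k (R ⧸ M)
  intro x hx
  refine isAlgebraic_of_isRegularAt f (fun r hr => deltaCore_le ((hf r).mp hr)) (hconst x hx)
    fun p hp => hconst _ fun D hD => ?_
  rw [D.leibniz_inv, D.map_aeval, hx D hD, smul_zero, smul_zero]
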